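/- For all spinors ψ, φ ∈ ℂ², the squared norm of the polarized quadratic map satisfies |q(ψ,φ)|_g² = (1/4)(|ψ|²|φ|² - (Re⟨iψ,φ⟩)²). In particular |q(ψ)|_g = (1/2)|ψ|². -/
import Mathlib


open Complex

/-- The Pauli matrices `σ₁, σ₂, σ₃`. -/
noncomputable def pauli : Fin 3 → Matrix (Fin 2) (Fin 2) ℂ :=
  ![!![0, 1; 1, 0], !![0, -I; I, 0], !![1, 0; 0, -1]]

/-- Clifford multiplication by the basis vectors: `c(e_j) = -i σ_j`. -/
noncomputable def cmul (j : Fin 3) : Matrix (Fin 2) (Fin 2) ℂ := (-I) • pauli j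

/-- The Hermitian inner product on `Δ = ℂ²`, complex-linear in the first entry. -/
noncomputable def inner' (ψ φ : Fin 2 → ℂ) : ℂ := ∑ j, ψ j * (starRingEnd ℂ) (φ j)

/-- Real coefficients of the polarized quadratic covector
`q(ψ,φ) = -(1/2) i Im⟨c(e_j)ψ,φ⟩ e^j`, i.e. `q(ψ,φ) = i·∑ (qPol ψ φ j) e^j`. -/
noncomputable def qPol (ψ φ : Fin 2 → ℂ) (j : Fin 3) : ℝ :=
  -(1/2) * (inner' ((cmul j).mulVec ψ) φ).im


lemma key (ψ φ : Fin 2 → ℂ) :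
    ∑ j, (qPol ψ φ j) ^ 2
      = (1/4) * ((∑ i, normSq (ψ i)) * (∑ i, normSq (φ i))
          - ((inner' (I • ψ) φ).re) ^ 2) := by
  simp [qPol, inner', cmul, pauli, Matrix.mulVec, dotProduct, Fin.sum_univ_succ,
    Complex.normSq_apply, Complex.ext_iff, Complex.add_im, Complex.mul_im, Complex.mul_re]
  ring

/-- `|q(ψ,φ)|_g² = (1/4)(|ψ|²|φ|² - (Re⟨iψ,φ⟩)²)`; in particular
`|q(ψ)|_g = |q(ψ,ψ)|_g = (1/2)|ψ|²`. -/
theorem stmt3 (ψ φ : Fin 2 → ℂ) :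
    (∑ j, (qPol ψ φ j) ^ 2
      = (1/4) * ((∑ i, normSq (ψ i)) * (∑ i, normSq (φ i))
          - ((inner' (I • ψ) φ).re) ^ 2)) ∧
    Real.sqrt (∑ j, (qPol ψ ψ j) ^ 2) = (1/2) * ∑ i, normSq (ψ i) := by
  refine ⟨key ψ φ, ?_⟩
  have h := key ψ ψ
  have h0 : (inner' (I • ψ) ψ).re = 0 := by
    simp [inner', Fin.sum_univ_succ, Complex.mul_re]
    ring
  rw [h, h0]
  rw [show (1/4) * ((∑ i, normSq (ψ i)) * (∑ i, normSq (ψ i)) - 0 ^ 2)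
      = ((1/2) * ∑ i, normSq (ψ i)) ^ 2 by ring]
  exact Real.sqrt_sq (mul_nonneg (by norm_num) (Finset.sum_nonneg fun i _ => normSq_nonneg _))
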